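/- Let D be a ghost-free diagram and suppose {C_i}_{i=1}^n is a partition of the nonempty columns of D such that for each i: (b) a column c ∈ C_i contains a dark cloud of Res(D,C_i) if and only if it contains a dark cloud of D; and (c) if (r,c) ∈ dark(Res(D,C_i)) and (r̂,c) ∈ dark(D), then r̂ ≤ r and (r̃,c) ∈ D for all r̂ ≤ r̃ ≤ r. Then Σ_{i=1}^n sf(Res(D,C_i)) = sf(D). -/
import Mathlib


open Finset

/-- A diagram: a finite set of cells in ℕ×ℕ (recorded as (row, column)),
some of which may be marked as ghost cells. -/
structure Diagram where
  cells : Finset (ℕ × ℕ)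
  ghosts : Finset (ℕ × ℕ)
deriving DecidableEq

/-- `(r,c)` is the rightmost cell (ghost or not) in row `r` of `D`. -/
def Rightmost (D : Diagram) (r c : ℕ) : Prop :=
  (r, c) ∈ D.cells ∧ ∀ c' > c, (r, c') ∉ D.cells

/-- A nontrivial K-Kohnert move at row `r` of `D` is possible, taking the
rightmost cell `(r,c)` of row `r` (a non-ghost cell) down to the highest empty
position `(rhat, c)` below it in column `c`, with no ghost cell in between. -/
def KohnertMovable (D : Diagram) (r c rhat : ℕ) : Prop :=
  Rightmost D r c ∧ (r, c) ∉ D.ghosts ∧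
  1 ≤ rhat ∧ rhat < r ∧ (rhat, c) ∉ D.cells ∧
  ∀ r', rhat < r' → r' < r → (r', c) ∈ D.cells ∧ (r', c) ∉ D.ghosts

/-- Result of a Kohnert move: the cell `(r,c)` moves to `(rhat,c)`. -/
def applyKohnert (D : Diagram) (r c rhat : ℕ) : Diagram :=
  ⟨insert (rhat, c) (D.cells.erase (r, c)), D.ghosts⟩

/-- Result of a ghost move: the cell `(r,c)` moves to `(rhat,c)`, leaving a
ghost cell at `(r,c)`. -/
def applyGhost (D : Diagram) (r c rhat : ℕ) : Diagram :=
  ⟨insert (rhat, c) D.cells, insert (r, c) D.ghosts⟩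

/-- One (nontrivial) K-Kohnert move. -/
def KStep (D T : Diagram) : Prop :=
  ∃ r c rhat, KohnertMovable D r c rhat ∧
    (T = applyKohnert D r c rhat ∨ T = applyGhost D r c rhat)

/-- One (nontrivial) ghost move. -/
def GStep (D T : Diagram) : Prop :=
  ∃ r c rhat, KohnertMovable D r c rhat ∧ T = applyGhost D r c rhat

/-- All diagrams obtainable from `D` by sequences of K-Kohnert moves. -/
def KKD (D : Diagram) : Set Diagram := {T | Relation.ReflTransGen KStep D T}

/-- All diagrams obtainable from `D` by sequences of ghost moves. -/
def GKD (D : Diagram) : Set Diagram := {T | Relation.ReflTransGen GStep D T}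

/-- Maximum number of ghost cells over `KKD D`. -/
noncomputable def MaxG (D : Diagram) : ℕ :=
  sSup {n | ∃ T ∈ KKD D, T.ghosts.card = n}

/-- Maximum number of ghost cells over `GKD D`. -/
noncomputable def MaxGhat (D : Diagram) : ℕ :=
  sSup {n | ∃ T ∈ GKD D, T.ghosts.card = n}

/-- Dark clouds of a ghost-free diagram: working from the top row down, mark in
each row the rightmost cell having no marked cell above it in its column. -/
def dark (D : Finset (ℕ × ℕ)) : Finset (ℕ × ℕ) :=
  ((List.range (D.sup Prod.fst + 1)).reverse).foldl
    (fun acc r =>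
      let cand := (D.filter (fun p => p.1 = r ∧ ∀ q ∈ acc, q.2 ≠ p.2)).image Prod.snd
      if h : cand.Nonempty then insert (r, cand.max' h) acc else acc) ∅

/-- Snowflakes of the snow diagram: empty positions lying below a dark cloud
in its column. -/
def snowflakes (D : Finset (ℕ × ℕ)) : Finset (ℕ × ℕ) :=
  ((Finset.range (D.sup Prod.fst + 1)) ×ˢ (D.image Prod.snd)).filter
    (fun p => 1 ≤ p.1 ∧ p ∉ D ∧ ∃ q ∈ dark D, q.2 = p.2 ∧ p.1 < q.1)

/-- Number of snowflakes of the snow diagram of a ghost-free diagram. -/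
def sf (D : Finset (ℕ × ℕ)) : ℕ := (snowflakes D).card

/-- A generalized skew diagram: each nonempty row is a contiguous run of cells,
and both leftmost and rightmost columns weakly increase with the row index. -/
def IsGenSkew (D : Finset (ℕ × ℕ)) : Prop :=
  (∀ p ∈ D, 1 ≤ p.1 ∧ 1 ≤ p.2) ∧
  (∀ r c₁ c c₂, (r, c₁) ∈ D → (r, c₂) ∈ D → c₁ ≤ c → c ≤ c₂ → (r, c) ∈ D) ∧
  (∀ r₁ r₂ c₁, r₁ < r₂ → (r₁, c₁) ∈ D → (∃ c, (r₂, c) ∈ D) →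
      ∃ c₂, c₁ ≤ c₂ ∧ (r₂, c₂) ∈ D) ∧
  (∀ r₁ r₂ c₂, r₁ < r₂ → (r₂, c₂) ∈ D → (∃ c, (r₁, c) ∈ D) →
      ∃ c₁, c₁ ≤ c₂ ∧ (r₁, c₁) ∈ D)

/-- `Key(D)`: the minimal key diagram containing `D`. -/
def keyOf (D : Finset (ℕ × ℕ)) : Finset (ℕ × ℕ) :=
  D.biUnion (fun p => (Finset.Icc 1 p.2).image (fun c => (p.1, c)))

/-- Largest index `i < j` (0-indexed) with `α_i > 0`. -/
def prevIdx (α : List ℕ) (j : ℕ) : Option ℕ :=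
  ((List.range j).filter (fun i => 0 < α.getD i 0)).max?

/-- Contribution of step 2 of the skew-diagram construction at (0-indexed) row `j`. -/
def step2contrib (α : List ℕ) (j : ℕ) : ℕ :=
  if 0 < α.getD j 0 then
    match prevIdx α j with
    | none => 0
    | some i => α.getD i 0 - α.getD j 0
  else 0

/-- Total rightward shift of (0-indexed) row `k` in the skew-diagram construction. -/
def rowShift (α : List ℕ) (k : ℕ) : ℕ :=
  (∑ j ∈ Finset.range (k + 1), step2contrib α j) +
    ((List.range k).filter (fun i => α.getD i 0 = 0)).length

/-- The skew diagram `S(α)` of a weak composition `α`. -/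
def skewDiagram (α : List ℕ) : Finset (ℕ × ℕ) :=
  (Finset.range α.length).biUnion (fun i =>
    (Finset.Icc 1 (α.getD i 0)).image (fun c => (i + 1, c + rowShift α i)))

/-- The lock diagram of a weak composition `α`: `α_i` right-justified cells in row `i`. -/
def lockDiagram (α : List ℕ) : Finset (ℕ × ℕ) :=
  (Finset.range α.length).biUnion (fun i =>
    (Finset.range (α.getD i 0)).image (fun j => (i + 1, α.foldr max 0 - j)))

/-- `L` is a lock-tableau labeling of content `α` on the given set of cells. -/
def IsLockLabeling (α : List ℕ) (cells : Finset (ℕ × ℕ)) (L : ℕ × ℕ → ℕ) : Prop :=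
  (∀ p ∈ cells, 1 ≤ L p ∧ L p ≤ α.length) ∧
  (∀ j, 1 ≤ j → j ≤ α.length → 0 < α.getD (j - 1) 0 →
    ∀ c, α.foldr max 0 - α.getD (j - 1) 0 + 1 ≤ c → c ≤ α.foldr max 0 →
      ∃! p, p ∈ cells ∧ p.2 = c ∧ L p = j) ∧
  (∀ p ∈ cells, p.1 ≤ L p) ∧
  (∀ p ∈ cells, ∀ q ∈ cells, L p = L q → p.2 < q.2 → q.1 ≤ p.1) ∧
  (∀ p ∈ cells, ∀ q ∈ cells, p.2 = q.2 → p.1 < q.1 → L p < L q)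

/-- Label of the position `(r,c)` of `T`: for a ghost cell, the label of the
highest non-ghost cell weakly below it in column `c`. -/
def ghostLabel (T : Diagram) (L : ℕ × ℕ → ℕ) (r c : ℕ) : ℕ :=
  L (((T.cells \ T.ghosts).filter (fun p => p.2 = c ∧ p.1 ≤ r)).sup Prod.fst, c)

/-- The labels, within one column with row set `Rc`, of the modified snow
diagram, where `U` is the set of rows occupied in later columns; rows are
processed from top to bottom. -/
def colLabelList (Rc U : Finset ℕ) : List (ℕ × ℕ) :=
  ((Rc.sort (· ≤ ·)).reverse).foldl
    (fun acc r =>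
      if r ∈ U then (r, r) :: acc
      else
        let cand := U.filter (fun s => s < r ∧ ∀ q ∈ acc, q.2 ≠ s)
        if h : cand.Nonempty then (r, cand.max' h) :: acc else (r, 1) :: acc)
    []

/-- The label of a cell `p ∈ D` in the modified snow diagram `snow-hat(D)`. -/
def hatLabel (D : Finset (ℕ × ℕ)) (p : ℕ × ℕ) : ℕ :=
  ((colLabelList ((D.filter (fun q => q.2 = p.2)).image Prod.fst)
      ((D.filter (fun q => p.2 < q.2)).image Prod.fst)).lookup p.1).getD 0

/-- Number of snowflakes of the modified snow diagram `snow-hat(D)`. -/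
def sfhat (D : Finset (ℕ × ℕ)) : ℕ :=
  (((Finset.range (D.sup Prod.fst + 1)) ×ˢ (D.image Prod.snd)).filter
    (fun p => 1 ≤ p.1 ∧ p ∉ D ∧
      ∃ q ∈ D, q.2 = p.2 ∧ p.1 < q.1 ∧ hatLabel D q ≤ p.1)).card

/-- Cells of `D` that are rightmost in their row. -/
def rmostCells (D : Finset (ℕ × ℕ)) : Finset (ℕ × ℕ) :=
  D.filter (fun p => ∀ q ∈ D, q.1 = p.1 → q.2 ≤ p.2)

/-- `S(D)`: cells that are not rightmost in their row and such that no cell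
above them in their column is rightmost in its row. -/
def SofD (D : Finset (ℕ × ℕ)) : Finset (ℕ × ℕ) :=
  D.filter (fun p => p ∉ rmostCells D ∧
    ∀ q ∈ D, q.2 = p.2 → p.1 < q.1 → q ∉ rmostCells D)

/-- Restriction of `D` to the columns in `C`. -/
def Res (D : Finset (ℕ × ℕ)) (C : Finset ℕ) : Finset (ℕ × ℕ) :=
  D.filter (fun p => p.2 ∈ C)

open Classical in
/-- The ghost move at row `r`, as a function (identity when no move is possible). -/
noncomputable def gmove (T : Diagram) (r : ℕ) : Diagram :=
  if h : ∃ p : ℕ × ℕ, KohnertMovable T r p.1 p.2 then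
    applyGhost T r h.choose.1 h.choose.2
  else T

/-- Dark clouds are cells of the diagram. -/
lemma dark_subset (E : Finset (ℕ × ℕ)) : dark E ⊆ E := by
  unfold dark
  generalize (List.range (E.sup Prod.fst + 1)).reverse = l
  have key : ∀ (l : List ℕ) (acc : Finset (ℕ × ℕ)), acc ⊆ E →
      l.foldl (fun acc r =>
        let cand := (E.filter (fun p => p.1 = r ∧ ∀ q ∈ acc, q.2 ≠ p.2)).image Prod.snd
        if h : cand.Nonempty then insert (r, cand.max' h) acc else acc) acc ⊆ E := by
    intro l
    induction l with
    | nil => intro acc h; simpa using h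
    | cons r l ih =>
      intro acc h
      rw [List.foldl_cons]
      apply ih
      dsimp only
      split_ifs with hne
      · intro p hp
        rcases Finset.mem_insert.1 hp with hp | hp
        · subst hp
          have hm := Finset.max'_mem _ hne
          rcases Finset.mem_image.1 hm with ⟨q, hq, hq2⟩
          rcases Finset.mem_filter.1 hq with ⟨hqE, hq1, _⟩
          have heq : q = (r, _) := Prod.ext hq1 hq2
          exact heq ▸ hqE
        · exact h hp
      · exact h
  exact key _ _ (Finset.empty_subset E)

/-- Per-column snowflake set. -/
def colSF (E : Finset (ℕ × ℕ)) (c : ℕ) : Finset ℕ :=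
  (Finset.range (E.sup Prod.fst + 1)).filter
    (fun r => 1 ≤ r ∧ (r, c) ∉ E ∧ ∃ q ∈ dark E, q.2 = c ∧ r < q.1)

lemma sf_eq_sum_colSF (E : Finset (ℕ × ℕ)) :
    sf E = ∑ c ∈ E.image Prod.snd, (colSF E c).card := by
  unfold sf snowflakes
  rw [Finset.card_eq_sum_card_fiberwise (f := Prod.snd) (t := E.image Prod.snd)
    (fun p hp => (Finset.mem_product.1 (Finset.mem_filter.1 hp).1).2)]
  refine Finset.sum_congr rfl fun c hc => ?_
  have hinj : Function.Injective (fun r : ℕ => (r, c)) :=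
    fun a b hab => congrArg Prod.fst hab
  rw [← Finset.card_image_of_injective (colSF E c) hinj]
  congr 1
  ext p
  constructor
  · intro hp
    rcases Finset.mem_filter.1 hp with ⟨hp1, hp2⟩
    rcases Finset.mem_filter.1 hp1 with ⟨hpp, h1, h2, h3⟩
    rcases Finset.mem_product.1 hpp with ⟨hr, _⟩
    have hpe : (p.1, c) = p := by rw [← hp2]
    refine Finset.mem_image.2 ⟨p.1, Finset.mem_filter.2 ⟨hr, h1, ?_, ?_⟩, hpe⟩
    · rw [hpe]; exact h2
    · simpa [hp2] using h3
  · intro hp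
    rcases Finset.mem_image.1 hp with ⟨a, ha, hae⟩
    rcases Finset.mem_filter.1 ha with ⟨hr, h1, h2, h3⟩
    subst hae
    exact Finset.mem_filter.2 ⟨Finset.mem_filter.2
      ⟨Finset.mem_product.2 ⟨hr, hc⟩, h1, h2, by simpa using h3⟩, rfl⟩

/-- If {C_i} is a partition of the nonempty columns of a
ghost-free diagram D satisfying the dark-cloud compatibility conditions (b)
and (c), then Σᵢ sf(Res(D,C_i)) = sf(D). -/
theorem sf_partition_sum (D : Finset (ℕ × ℕ))
    (hpos : ∀ p ∈ D, 1 ≤ p.1 ∧ 1 ≤ p.2)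
    (n : ℕ) (C : ℕ → Finset ℕ)
    (hdisj : ∀ i j, i < n → j < n → i ≠ j → Disjoint (C i) (C j))
    (hcover : D.image Prod.snd = (Finset.range n).biUnion C)
    (hb : ∀ i < n, ∀ c ∈ C i,
      (∃ r, (r, c) ∈ dark (Res D (C i))) ↔ (∃ r, (r, c) ∈ dark D))
    (hc : ∀ i < n, ∀ c ∈ C i, ∀ r rhat,
      (r, c) ∈ dark (Res D (C i)) → (rhat, c) ∈ dark D →
        rhat ≤ r ∧ ∀ rt, rhat ≤ rt → rt ≤ r → (rt, c) ∈ D) :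
    ∑ i ∈ Finset.range n, sf (Res D (C i)) = sf D := by
  have hsub : ∀ i, Res D (C i) ⊆ D := fun i => Finset.filter_subset _ _
  have hcols : ∀ i < n, (Res D (C i)).image Prod.snd = C i := by
    intro i hi
    apply Finset.Subset.antisymm
    · intro c hcm
      rcases Finset.mem_image.1 hcm with ⟨p, hp, rfl⟩
      exact (Finset.mem_filter.1 hp).2
    · intro c hcm
      have : c ∈ D.image Prod.snd := by
        rw [hcover]; exact Finset.mem_biUnion.2 ⟨i, Finset.mem_range.2 hi, hcm⟩
      rcases Finset.mem_image.1 this with ⟨p, hp, rfl⟩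
      exact Finset.mem_image.2 ⟨p, Finset.mem_filter.2 ⟨hp, hcm⟩, rfl⟩
  have hcol : ∀ i < n, ∀ c ∈ C i, colSF (Res D (C i)) c = colSF D c := by
    intro i hi c hci
    have hmem : ∀ r, (r, c) ∈ Res D (C i) ↔ (r, c) ∈ D := by
      intro r; simp [Res, hci]
    ext r
    simp only [colSF, Finset.mem_filter, Finset.mem_range]
    constructor
    · rintro ⟨hr, h1, h2, q, hq, hq2, hq3⟩
      have hq' : (q.1, c) ∈ dark (Res D (C i)) := by
        rw [← hq2]; simpa using hq
      obtain ⟨rhat, hrhat⟩ := (hb i hi c hci).1 ⟨q.1, hq'⟩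
      obtain ⟨hle, hint⟩ := hc i hi c hci q.1 rhat hq' hrhat
      have hrD : (r, c) ∉ D := fun h => h2 ((hmem r).2 h)
      have hlt : r < rhat := by
        by_contra hge
        exact hrD (hint r (le_of_not_gt hge) (le_of_lt hq3))
      refine ⟨?_, h1, hrD, (rhat, c), hrhat, rfl, hlt⟩
      calc r < D.sup Prod.fst + 1 := by
            have : rhat ≤ D.sup Prod.fst :=
              Finset.le_sup (f := Prod.fst) (dark_subset D hrhat)
            omega
        _ = D.sup Prod.fst + 1 := rfl
    · rintro ⟨hr, h1, h2, q, hq, hq2, hq3⟩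
      have hq' : (q.1, c) ∈ dark D := by
        rw [← hq2]; simpa using hq
      obtain ⟨r', hr'⟩ := (hb i hi c hci).2 ⟨q.1, hq'⟩
      obtain ⟨hle, _⟩ := hc i hi c hci r' q.1 hr' hq'
      have hrRes : (r, c) ∉ Res D (C i) := fun h => h2 ((hmem r).1 h)
      refine ⟨?_, h1, hrRes, (r', c), hr', rfl, lt_of_lt_of_le hq3 hle⟩
      have : r' ≤ (Res D (C i)).sup Prod.fst :=
        Finset.le_sup (f := Prod.fst) (dark_subset _ hr')
      omega
  calc ∑ i ∈ Finset.range n, sf (Res D (C i))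
      = ∑ i ∈ Finset.range n, ∑ c ∈ C i, (colSF D c).card := by
        refine Finset.sum_congr rfl fun i hi => ?_
        rw [sf_eq_sum_colSF, hcols i (Finset.mem_range.1 hi)]
        exact Finset.sum_congr rfl fun c hci => by
          rw [hcol i (Finset.mem_range.1 hi) c hci]
    _ = ∑ c ∈ (Finset.range n).biUnion C, (colSF D c).card := by
        rw [Finset.sum_biUnion]
        intro i hi j hj hne
        exact hdisj i j (Finset.mem_range.1 (by simpa using hi))
          (Finset.mem_range.1 (by simpa using hj)) hne
    _ = sf D := by rw [← hcover, ← sf_eq_sum_colSF]
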